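/- For every x ∈ Z^3 with x_1 ≥ 0, m̄(x) = m̄(0)·e^{−γ·x_1}, where m̄(0) denotes the value of m̄ at the origin (m̄ depends only on the first coordinate). -/

import Mathlib

open Real Filter

/-- Points of `ℤ³`. -/
abbrev Z3 : Type := ℤ × ℤ × ℤ

/-- Nearest-neighbor relation `x ∼ y`, i.e. `|x − y| = 1`. -/
def adj (x y : Z3) : Prop :=
  |x.1 - y.1| + |x.2.1 - y.2.1| + |x.2.2 - y.2.2| = 1

instance : DecidableRel adj := fun x y => by unfold adj; infer_instance

/-- The six nearest neighbors of a site. -/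
def nbrs (x : Z3) : Finset Z3 :=
  {(x.1 + 1, x.2), (x.1 - 1, x.2), (x.1, x.2.1 + 1, x.2.2), (x.1, x.2.1 - 1, x.2.2),
    (x.1, x.2.1, x.2.2 + 1), (x.1, x.2.1, x.2.2 - 1)}

/-- `h_x = h·1_{x₁<0}`. -/
noncomputable def hfun (h : ℝ) (x : Z3) : ℝ := if x.1 < 0 then h else 0

/-- One-step transition probability of simple random walk: `p(x,y) = (1/6)·1_{x∼y}`. -/
noncomputable def pker (x y : Z3) : ℝ := if adj x y then 1 / 6 else 0

/-- `n`-step transition probabilities: `p⁰(x,y) = 1_{x=y}`,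
`p^{n+1}(x,y) = Σ_z pⁿ(x,z)·p(z,y)`. -/
noncomputable def pn : ℕ → Z3 → Z3 → ℝ
  | 0, x, y => if x = y then 1 else 0
  | n + 1, x, y => ∑ z ∈ nbrs y, pn n x z * pker z y

/-- `ω = 6J/(1+6J)`. -/
noncomputable def om (J : ℝ) : ℝ := 6 * J / (1 + 6 * J)

/-- `m̄(x) = Σ_{n≥0} ωⁿ Σ_{y∈ℤ³} pⁿ(x,y)·h_y/(1+6J)`. -/
noncomputable def mbar (J h : ℝ) (x : Z3) : ℝ :=
  ∑' n : ℕ, om J ^ n * ∑' y : Z3, pn n x y * hfun h y / (1 + 6 * J)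

/-- the inverse hyperbolic cosine on `[1, ∞)`: `arccosh y = log (y + √(y² − 1))`. -/
noncomputable def arccosh (y : ℝ) : ℝ := Real.log (y + Real.sqrt (y ^ 2 - 1))

/-- `γ = arccosh(1 + 1/(2J))`, the unique positive solution of `3 = (6J/(1+6J))(2 + cosh γ)`. -/
noncomputable def gam (J : ℝ) : ℝ := arccosh (1 + 1 / (2 * J))

/-! Since `h_y` depends only on `y₁`, the walk's moves in the second and third coordinates act
as holding steps: `m̄(x) = F(x₁)`, where `F = Σ ωⁿ Lⁿ f` is the resolvent of the lazy walk
`L g(k) = (g(k-1) + g(k+1) + 4 g(k)) / 6` on `ℤ`, applied to `f(k) = h·1_{k<0}/(1+6J)`.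
`F` is bounded and `F = f + ω L F`, so for `k ≥ 0` it satisfies
`F(k+1) = 2 cosh γ · F(k) - F(k-1)`. Every solution is a combination of `e^{-γk}` and `e^{γk}`,
and boundedness rules out the growing one. -/

lemma adj_of_mem_nbrs {x y : Z3} (h : y ∈ nbrs x) : adj x y := by
  obtain ⟨a, b, c⟩ := x
  simp only [nbrs, Finset.mem_insert, Finset.mem_singleton] at h
  rcases h with rfl | rfl | rfl | rfl | rfl | rfl <;> simp [adj]

lemma mem_nbrs_comm {x y : Z3} : x ∈ nbrs y ↔ y ∈ nbrs x := by
  obtain ⟨a, b, c⟩ := x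
  obtain ⟨p, q, s⟩ := y
  simp only [nbrs, Finset.mem_insert, Finset.mem_singleton, Prod.mk.injEq]
  constructor <;>
    rintro (⟨rfl, rfl, rfl⟩ | ⟨rfl, rfl, rfl⟩ | ⟨rfl, rfl, rfl⟩ | ⟨rfl, rfl, rfl⟩ |
      ⟨rfl, rfl, rfl⟩ | ⟨rfl, rfl, rfl⟩) <;> omega

lemma sum_nbrs_comp_fst (x : Z3) (g : ℤ → ℝ) :
    ∑ y ∈ nbrs x, g y.1 = g (x.1 - 1) + g (x.1 + 1) + 4 * g x.1 := by
  obtain ⟨a, b, c⟩ := x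
  rw [nbrs, Finset.sum_insert (by grind), Finset.sum_insert (by grind),
    Finset.sum_insert (by grind), Finset.sum_insert (by grind), Finset.sum_insert (by grind),
    Finset.sum_singleton]
  ring

lemma pn_succ' (n : ℕ) (x y : Z3) : pn (n + 1) x y = ∑ w ∈ nbrs x, pker x w * pn n w y := by
  induction n generalizing y with
  | zero =>
    simp only [pn, mul_ite, mul_one, mul_zero, ite_mul, one_mul, zero_mul, Finset.sum_ite_eq,
      Finset.sum_ite_eq', mem_nbrs_comm]
  | succ n ih =>
    calc pn (n + 1 + 1) x y
        = ∑ z ∈ nbrs y, (∑ w ∈ nbrs x, pker x w * pn n w z) * pker z y := by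
          rw [pn]
          simp only [ih]
      _ = ∑ w ∈ nbrs x, pker x w * pn (n + 1) w y := by
          simp only [pn, Finset.sum_mul, Finset.mul_sum, mul_assoc]
          exact Finset.sum_comm

lemma summable_pn_mul (n : ℕ) (x : Z3) (g : Z3 → ℝ) : Summable fun y => pn n x y * g y := by
  induction n generalizing x with
  | zero =>
    refine summable_of_ne_finset_zero (s := {x}) fun y hy => ?_
    rw [Finset.mem_singleton] at hy
    simp [pn, Ne.symm hy]
  | succ n ih =>
    simp only [pn_succ', Finset.sum_mul, mul_assoc]
    exact summable_sum fun w _ => (ih w).mul_left _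

noncomputable def lazyWalk (g : ℤ → ℝ) (k : ℤ) : ℝ :=
  (g (k - 1) + g (k + 1) + 4 * g k) / 6

lemma tsum_pn_mul_comp_fst (n : ℕ) (x : Z3) (g : ℤ → ℝ) :
    ∑' y, pn n x y * g y.1 = lazyWalk^[n] g x.1 := by
  induction n generalizing x with
  | zero =>
    rw [tsum_eq_single x fun y hy => by simp [pn, Ne.symm hy]]
    simp [pn]
  | succ n ih =>
    calc ∑' y, pn (n + 1) x y * g y.1
        = ∑ w ∈ nbrs x, pker x w * ∑' y, pn n w y * g y.1 := by
          simp only [pn_succ', Finset.sum_mul, mul_assoc]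
          rw [Summable.tsum_finsetSum fun w _ => (summable_pn_mul n w _).mul_left _]
          simp only [tsum_mul_left]
      _ = ∑ w ∈ nbrs x, lazyWalk^[n] g w.1 / 6 := by
          refine Finset.sum_congr rfl fun w hw => ?_
          rw [ih, pker, if_pos (adj_of_mem_nbrs hw)]
          ring
      _ = lazyWalk^[n + 1] g x.1 := by
          rw [← Finset.sum_div, sum_nbrs_comp_fst, Function.iterate_succ_apply', lazyWalk]

lemma lazyWalk_const_mul (c : ℝ) (g : ℤ → ℝ) (k : ℤ) :
    lazyWalk (fun j => c * g j) k = c * lazyWalk g k := by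
  simp only [lazyWalk]
  ring

lemma lazyWalk_tsum {a : ℕ → ℤ → ℝ} (ha : ∀ k, Summable fun n => a n k) (k : ℤ) :
    lazyWalk (fun j => ∑' n, a n j) k = ∑' n, lazyWalk (a n) k := by
  simp only [lazyWalk]
  rw [tsum_div_const, Summable.tsum_add ((ha _).add (ha _)) ((ha k).mul_left 4),
    Summable.tsum_add (ha _) (ha _), tsum_mul_left]

noncomputable def lazyResolvent (ω : ℝ) (g : ℤ → ℝ) (k : ℤ) : ℝ :=
  ∑' n : ℕ, ω ^ n * lazyWalk^[n] g k

section lazyResolvent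

variable {ω C : ℝ} {g : ℤ → ℝ}

lemma abs_lazyWalk_iterate_le (hg : ∀ k, |g k| ≤ C) (n : ℕ) (k : ℤ) :
    |lazyWalk^[n] g k| ≤ C := by
  induction n generalizing k with
  | zero => exact hg k
  | succ n ih =>
    rw [Function.iterate_succ_apply', lazyWalk, abs_div,
      abs_of_pos (by norm_num : (0 : ℝ) < 6), div_le_iff₀ (by norm_num)]
    calc |lazyWalk^[n] g (k - 1) + lazyWalk^[n] g (k + 1) + 4 * lazyWalk^[n] g k|
        ≤ |lazyWalk^[n] g (k - 1)| + |lazyWalk^[n] g (k + 1)| + 4 * |lazyWalk^[n] g k| := by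
          grw [abs_add_le, abs_add_le, abs_mul, abs_of_pos (by norm_num : (0 : ℝ) < 4)]
      _ ≤ C * 6 := by linarith [ih (k - 1), ih (k + 1), ih k]

lemma abs_pow_mul_lazyWalk_iterate_le (hg : ∀ k, |g k| ≤ C) (k : ℤ) (n : ℕ) :
    ‖ω ^ n * lazyWalk^[n] g k‖ ≤ C * |ω| ^ n := by
  rw [Real.norm_eq_abs, abs_mul, abs_pow, mul_comm]
  exact mul_le_mul_of_nonneg_right (abs_lazyWalk_iterate_le hg n k) (by positivity)

lemma summable_pow_mul_lazyWalk_iterate (hω : |ω| < 1) (hg : ∀ k, |g k| ≤ C) (k : ℤ) :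
    Summable fun n : ℕ => ω ^ n * lazyWalk^[n] g k :=
  Summable.of_norm_bounded ((summable_geometric_of_lt_one (abs_nonneg ω) hω).mul_left C)
    (abs_pow_mul_lazyWalk_iterate_le hg k)

lemma abs_lazyResolvent_le (hω : |ω| < 1) (hg : ∀ k, |g k| ≤ C) (k : ℤ) :
    |lazyResolvent ω g k| ≤ C / (1 - |ω|) := by
  rw [div_eq_mul_inv]
  exact tsum_of_norm_bounded ((hasSum_geometric_of_lt_one (abs_nonneg ω) hω).mul_left C)
    (abs_pow_mul_lazyWalk_iterate_le hg k)

lemma lazyResolvent_eq (hω : |ω| < 1) (hg : ∀ k, |g k| ≤ C) (k : ℤ) :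
    lazyResolvent ω g k = g k + ω * lazyWalk (lazyResolvent ω g) k := by
  have hsum := summable_pow_mul_lazyWalk_iterate hω hg
  unfold lazyResolvent
  rw [(hsum k).tsum_eq_zero_add, lazyWalk_tsum hsum, ← tsum_mul_left]
  simp only [pow_zero, one_mul, Function.iterate_zero_apply, Function.iterate_succ_apply',
    lazyWalk_const_mul, pow_succ]
  congr 1
  exact tsum_congr fun n => by ring

lemma lazyResolvent_recurrence (hω : |ω| < 1) (hω0 : ω ≠ 0) (hg : ∀ k, |g k| ≤ C)
    {k : ℤ} (hk : g k = 0) :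
    lazyResolvent ω g (k + 1) =
      (6 / ω - 4) * lazyResolvent ω g k - lazyResolvent ω g (k - 1) := by
  have h := lazyResolvent_eq hω hg k
  rw [hk, zero_add, lazyWalk] at h
  field_simp
  linarith

end lazyResolvent

lemma eq_mul_exp_of_bounded_of_recurrence {γ C : ℝ} (hγ : 0 < γ) {u : ℕ → ℝ}
    (hu : ∀ n, |u n| ≤ C) (hrec : ∀ n, u (n + 2) = 2 * cosh γ * u (n + 1) - u n) (n : ℕ) :
    u n = u 0 * exp (-γ * n) := by
  have hinv : exp γ * exp (-γ) = 1 := by rw [← exp_add, add_neg_cancel, exp_zero]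
  set v : ℕ → ℝ := fun n => u (n + 1) - exp (-γ) * u n with hv
  have hv_succ : ∀ n, v (n + 1) = exp γ * v n := fun n => by
    simp only [hv, hrec, cosh_eq]
    linear_combination u n * hinv
  have hv_pow : ∀ n, v 0 = v n * exp (-γ) ^ n := fun n => by
    induction n with
    | zero => simp
    | succ n ih =>
      rw [ih, hv_succ, pow_succ]
      linear_combination -(v n * exp (-γ) ^ n) * hinv
  -- `v n = v 0 * exp (γ n)` with `v` bounded, so `v 0 = 0`
  have hv_zero : v 0 = 0 := by
    refine tendsto_nhds_unique (l := atTop) (tendsto_const_nhds.congr hv_pow) ?_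
    have hr : exp (-γ) < 1 := exp_lt_one_iff.mpr (neg_lt_zero.mpr hγ)
    refine bdd_le_mul_tendsto_zero' (C + exp (-γ) * C) (Eventually.of_forall fun n => ?_)
      (tendsto_pow_atTop_nhds_zero_of_lt_one (exp_pos _).le hr)
    grw [abs_sub _ _, abs_mul, abs_of_pos (exp_pos _), hu, hu]
  have hv_all : ∀ n, v n = 0 := fun n => by
    induction n with
    | zero => exact hv_zero
    | succ n ih => rw [hv_succ, ih, mul_zero]
  induction n with
  | zero => simp
  | succ n ih =>
    have hu_succ : u (n + 1) = exp (-γ) * u n := sub_eq_zero.mp (hv_all n)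
    rw [hu_succ, ih, Nat.cast_succ, mul_add, mul_one, exp_add]
    ring

lemma one_lt_one_add_one_div_two_mul {J : ℝ} (hJ : 0 < J) : 1 < 1 + 1 / (2 * J) := by
  simpa using (by positivity : 0 < 1 / (2 * J))

lemma gam_pos {J : ℝ} (hJ : 0 < J) : 0 < gam J :=
  arcosh_pos (one_lt_one_add_one_div_two_mul hJ)

lemma two_mul_cosh_gam {J : ℝ} (hJ : 0 < J) : 2 * cosh (gam J) = 6 / om J - 4 := by
  rw [gam, arccosh, ← arcosh, cosh_arcosh (one_lt_one_add_one_div_two_mul hJ).le, om]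
  field_simp
  ring

lemma abs_om_lt_one {J : ℝ} (hJ : 0 < J) : |om J| < 1 := by
  rw [om, abs_of_pos (by positivity), div_lt_one (by positivity)]
  linarith

lemma mbar_eq_lazyResolvent (J h : ℝ) (x : Z3) :
    mbar J h x = lazyResolvent (om J) (fun k => (if k < 0 then h else 0) / (1 + 6 * J)) x.1 := by
  simp only [mbar, lazyResolvent, ← tsum_pn_mul_comp_fst, mul_div_assoc, hfun]

theorem statement10_general (J h : ℝ) (hJ : 0 < J) :
    ∀ x : Z3, 0 ≤ x.1 →
      mbar J h x = mbar J h (0, 0, 0) * Real.exp (-gam J * (x.1 : ℝ)) := by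
  rintro ⟨k, y⟩ (hk : 0 ≤ k)
  lift k to ℕ using hk
  set f : ℤ → ℝ := fun k => (if k < 0 then h else 0) / (1 + 6 * J)
  have hf : ∀ k, |f k| ≤ |h| / (1 + 6 * J) := fun k => by
    simp only [f, abs_div, abs_of_pos (by positivity : (0 : ℝ) < 1 + 6 * J)]
    split_ifs
    · rfl
    · rw [abs_zero, zero_div]
      positivity
  have hrec : ∀ n : ℕ, lazyResolvent (om J) f (n + 2 : ℕ) =
      2 * cosh (gam J) * lazyResolvent (om J) f (n + 1 : ℕ) - lazyResolvent (om J) f n := by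
    intro n
    have hstep := lazyResolvent_recurrence (abs_om_lt_one hJ) (by unfold om; positivity) hf
      (k := n + 1) (by simp only [f]; rw [if_neg (by omega), zero_div])
    rw [two_mul_cosh_gam hJ]
    push_cast
    rwa [add_sub_cancel_right, add_assoc, one_add_one_eq_two] at hstep
  rw [mbar_eq_lazyResolvent, mbar_eq_lazyResolvent]
  exact_mod_cast eq_mul_exp_of_bounded_of_recurrence (gam_pos hJ)
    (fun n => abs_lazyResolvent_le (abs_om_lt_one hJ) hf n) hrec k

theorem statement10 (J h : ℝ) (hJ : 0 < J) (hh : h < 0) :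
    ∀ x : Z3, 0 ≤ x.1 →
      mbar J h x = mbar J h (0, 0, 0) * Real.exp (-gam J * (x.1 : ℝ)) :=
  statement10_general J h hJ
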